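/- For x, z in the open unit ball B^n of ℝⁿ (n ≥ 3), nonzero with x ≠ z, and y = φ_x(z), one has |1/|x-y|^{n-2} - 1/[x,y]^{n-2}| = [x,z]^{n-2}(1-|z|^{n-2})/(|z|^{n-2}(1-|x|²)^{n-2}). -/

import Mathlib

open Metric

/-- The quantity `[x,y] = | y|x| - x/|x| |`. -/
noncomputable def br {n : ℕ} (x y : EuclideanSpace ℝ (Fin n)) : ℝ :=
  ‖‖x‖ • y - ‖x‖⁻¹ • x‖

/-- The Möbius transformation `φ_x` of the unit ball. -/
noncomputable def mobius {n : ℕ} (x y : EuclideanSpace ℝ (Fin n)) : EuclideanSpace ℝ (Fin n) :=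
  (br x y ^ 2)⁻¹ • (‖x - y‖ ^ 2 • x - (1 - ‖x‖ ^ 2) • (y - x))

/-!
With `a = |x|`, `b = |z|`, `c = [x,z]` and `y = φ_x(z)`, the identity `c² = |x-z|² + (1-a²)(1-b²)`
and a direct computation give `x - y = (1-a²)/c² · (z - b² x)`, whence `|x - y| = (1-a²) b / c`;
together with `|y| = |x-z|/c` the same identity for `[x,y]` yields `[x,y] = (1-a²)/c`. The claim is
then the difference of the `(n-2)`-th powers of the reciprocals, nonnegative because `b < 1`.
-/

open scoped RealInnerProductSpace

lemma one_div_pow_sub_one_div_pow {a b c : ℝ} (ha : a ≠ 0) (hb : b ≠ 0) (hc : c ≠ 0) (k : ℕ) :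
    1 / (a * b / c) ^ k - 1 / (a / c) ^ k = c ^ k * (1 - b ^ k) / (b ^ k * a ^ k) := by
  rw [div_pow, div_pow, mul_pow, one_div_div, one_div_div]
  field_simp

section

variable {n : ℕ} {x z : EuclideanSpace ℝ (Fin n)}

lemma br_nonneg (x z : EuclideanSpace ℝ (Fin n)) : 0 ≤ br x z := norm_nonneg _

lemma br_sq (hx : x ≠ 0) : br x z ^ 2 = ‖x‖ ^ 2 * ‖z‖ ^ 2 - 2 * ⟪x, z⟫ + 1 := by
  have hxn : ‖x‖ ≠ 0 := norm_ne_zero_iff.mpr hx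
  rw [br, norm_sub_sq_real]
  simp only [norm_smul, real_inner_smul_left, real_inner_smul_right, Real.norm_eq_abs, abs_norm,
    abs_inv, real_inner_comm z x]
  field_simp

lemma br_sq_eq_norm_sub_sq_add (hx : x ≠ 0) :
    br x z ^ 2 = ‖x - z‖ ^ 2 + (1 - ‖x‖ ^ 2) * (1 - ‖z‖ ^ 2) := by
  rw [br_sq hx, norm_sub_sq_real]
  ring

lemma br_pos (hx0 : x ≠ 0) (hx : ‖x‖ < 1) (hz : ‖z‖ < 1) : 0 < br x z := by
  have h : 0 < br x z ^ 2 := by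
    rw [br_sq_eq_norm_sub_sq_add hx0]
    have : 0 < (1 - ‖x‖ ^ 2) * (1 - ‖z‖ ^ 2) := by
      apply mul_pos <;> nlinarith [norm_nonneg x, norm_nonneg z]
    positivity
  exact lt_of_le_of_ne (br_nonneg x z) (by rintro h0; simp [← h0] at h)

lemma norm_sub_norm_sq_smul_eq_mul_br (hx : x ≠ 0) : ‖z - ‖z‖ ^ 2 • x‖ = ‖z‖ * br x z := by
  refine (pow_left_inj₀ (norm_nonneg _) (mul_nonneg (norm_nonneg z) (br_nonneg x z))
    two_ne_zero).mp ?_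
  rw [norm_sub_sq_real, mul_pow, br_sq hx]
  simp only [norm_smul, real_inner_smul_right, Real.norm_eq_abs, abs_norm, abs_pow,
    real_inner_comm z x]
  ring

lemma norm_mobius (hx : x ≠ 0) : ‖mobius x z‖ = ‖x - z‖ / br x z := by
  have hnum : ‖‖x - z‖ ^ 2 • x - (1 - ‖x‖ ^ 2) • (z - x)‖ = ‖x - z‖ * br x z := by
    refine (pow_left_inj₀ (norm_nonneg _) (mul_nonneg (norm_nonneg _) (br_nonneg x z))
      two_ne_zero).mp ?_
    rw [norm_sub_sq_real, mul_pow, br_sq hx]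
    simp only [norm_smul, real_inner_smul_left, real_inner_smul_right, mul_pow, Real.norm_eq_abs,
      sq_abs, inner_sub_right, real_inner_self_eq_norm_sq, norm_sub_rev z x,
      norm_sub_sq_real]
    ring
  rw [mobius, norm_smul, hnum, norm_inv, norm_pow, Real.norm_eq_abs, abs_of_nonneg (br_nonneg x z)]
  rcases (br_nonneg x z).eq_or_lt with h0 | hpos
  · simp [← h0]
  · field_simp

lemma sub_mobius_eq_smul (hx0 : x ≠ 0) (hbr : br x z ≠ 0) :
    x - mobius x z = ((1 - ‖x‖ ^ 2) / br x z ^ 2) • (z - ‖z‖ ^ 2 • x) := by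
  rw [mobius]
  match_scalars
  · field_simp
    linear_combination br_sq_eq_norm_sub_sq_add (z := z) hx0
  · field_simp

lemma norm_sub_mobius (hx0 : x ≠ 0) (hx : ‖x‖ < 1) (hz : ‖z‖ < 1) :
    ‖x - mobius x z‖ = (1 - ‖x‖ ^ 2) * ‖z‖ / br x z := by
  have hc := br_pos hx0 hx hz
  have ha : 0 < 1 - ‖x‖ ^ 2 := by nlinarith [norm_nonneg x]
  rw [sub_mobius_eq_smul hx0 hc.ne', norm_smul, norm_sub_norm_sq_smul_eq_mul_br hx0,
    Real.norm_eq_abs, abs_of_pos (by positivity)]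
  field_simp

lemma br_mobius (hx0 : x ≠ 0) (hx : ‖x‖ < 1) (hz : ‖z‖ < 1) :
    br x (mobius x z) = (1 - ‖x‖ ^ 2) / br x z := by
  have hc := br_pos hx0 hx hz
  have ha : 0 < 1 - ‖x‖ ^ 2 := by nlinarith [norm_nonneg x]
  refine (pow_left_inj₀ (br_nonneg _ _) (by positivity) two_ne_zero).mp ?_
  rw [br_sq_eq_norm_sub_sq_add hx0, norm_sub_mobius hx0 hx hz, norm_mobius hx0]
  field_simp
  linear_combination br_sq_eq_norm_sub_sq_add (z := z) hx0

end

theorem stmt6_general (n : ℕ) (x z : EuclideanSpace ℝ (Fin n))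
    (hx : x ∈ Metric.ball (0 : EuclideanSpace ℝ (Fin n)) 1)
    (hz : z ∈ Metric.ball (0 : EuclideanSpace ℝ (Fin n)) 1)
    (hx0 : x ≠ 0) (hz0 : z ≠ 0)
    (y : EuclideanSpace ℝ (Fin n)) (hy : y = mobius x z) :
    |1 / ‖x - y‖ ^ (n - 2) - 1 / br x y ^ (n - 2)|
      = br x z ^ (n - 2) * (1 - ‖z‖ ^ (n - 2)) / (‖z‖ ^ (n - 2) * (1 - ‖x‖ ^ 2) ^ (n - 2)) := by
  rw [mem_ball_zero_iff] at hx hz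
  have ha : 0 < 1 - ‖x‖ ^ 2 := by nlinarith [norm_nonneg x]
  have hb : 0 < ‖z‖ := norm_pos_iff.mpr hz0
  have hc := br_pos hx0 hx hz
  rw [hy, norm_sub_mobius hx0 hx hz, br_mobius hx0 hx hz,
    one_div_pow_sub_one_div_pow ha.ne' hb.ne' hc.ne', abs_of_nonneg]
  have hzk : 0 ≤ 1 - ‖z‖ ^ (n - 2) := sub_nonneg.mpr (pow_le_one₀ hb.le hz.le)
  positivity

theorem stmt6 (n : ℕ) (hn : 3 ≤ n) (x z : EuclideanSpace ℝ (Fin n))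
    (hx : x ∈ Metric.ball (0 : EuclideanSpace ℝ (Fin n)) 1)
    (hz : z ∈ Metric.ball (0 : EuclideanSpace ℝ (Fin n)) 1)
    (hx0 : x ≠ 0) (hz0 : z ≠ 0) (hxz : x ≠ z)
    (y : EuclideanSpace ℝ (Fin n)) (hy : y = mobius x z) :
    |1 / ‖x - y‖ ^ (n - 2) - 1 / br x y ^ (n - 2)|
      = br x z ^ (n - 2) * (1 - ‖z‖ ^ (n - 2)) / (‖z‖ ^ (n - 2) * (1 - ‖x‖ ^ 2) ^ (n - 2)) :=
  stmt6_general n x z hx hz hx0 hz0 y hy
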